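/- arXiv:1801.05039 — 2 statements merged into one kernel-verified Lean document; each statement's English description precedes it below -/
import Mathlib

section
/- ("Almost" smoothness.) For any two stabilizing gains K and K′, C(K′) − C(K) = −2 Tr(Σ_{K′} (K−K′)^⊤ E_K) + Tr(Σ_{K′} (K−K′)^⊤ (R + B^⊤P_KB) (K−K′)). -/
open Matrix

noncomputable section

/-- Spectral radius of a real square matrix: the supremum of the absolute values of its
complex eigenvalues. -/
def specRad {d : ℕ} (M : Matrix (Fin d) (Fin d) ℝ) : ℝ :=
  ⨆ μ : spectrum ℂ (M.map (algebraMap ℝ ℂ)), ‖(μ : ℂ)‖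

/-- Minimum singular value of a real matrix. -/
def sigmaMin {m n : ℕ} (M : Matrix (Fin m) (Fin n) ℝ) : ℝ :=
  Real.sqrt (⨅ i, (show (Mᵀ * M).IsHermitian by simpa using Matrix.isHermitian_conjTranspose_mul_self M).eigenvalues i)

/-- Spectral norm (maximum singular value) of a real matrix. -/
def specNorm {m n : ℕ} (M : Matrix (Fin m) (Fin n) ℝ) : ℝ :=
  Real.sqrt (⨆ i, (show (Mᵀ * M).IsHermitian by simpa using Matrix.isHermitian_conjTranspose_mul_self M).eigenvalues i)

/-- Frobenius norm of a real matrix. -/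
def frobNorm {m n : ℕ} (M : Matrix (Fin m) (Fin n) ℝ) : ℝ :=
  Real.sqrt (∑ i, ∑ j, (M i j) ^ 2)

/-- For a stabilizing gain `K`, the unique positive semidefinite solution `P_K` of
`P = Q + Kᵀ R K + (A - B K)ᵀ P (A - B K)`, given by its convergent series representation. -/
def Pmat {d k : ℕ} (A : Matrix (Fin d) (Fin d) ℝ) (B : Matrix (Fin d) (Fin k) ℝ)
    (Q : Matrix (Fin d) (Fin d) ℝ) (R : Matrix (Fin k) (Fin k) ℝ)
    (K : Matrix (Fin k) (Fin d) ℝ) : Matrix (Fin d) (Fin d) ℝ :=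
  ∑' t : ℕ, ((A - B * K)ᵀ) ^ t * (Q + Kᵀ * R * K) * (A - B * K) ^ t

/-- The state correlation matrix `Σ_K = ∑_{t} (A-BK)^t Σ₀ ((A-BK)ᵀ)^t`. -/
def SigmaMat {d k : ℕ} (A : Matrix (Fin d) (Fin d) ℝ) (B : Matrix (Fin d) (Fin k) ℝ)
    (Sig0 : Matrix (Fin d) (Fin d) ℝ) (K : Matrix (Fin k) (Fin d) ℝ) :
    Matrix (Fin d) (Fin d) ℝ :=
  ∑' t : ℕ, (A - B * K) ^ t * Sig0 * ((A - B * K)ᵀ) ^ t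

/-- The LQR cost `C(K) = Tr(Σ₀ P_K)`. -/
def Cost {d k : ℕ} (A : Matrix (Fin d) (Fin d) ℝ) (B : Matrix (Fin d) (Fin k) ℝ)
    (Q : Matrix (Fin d) (Fin d) ℝ) (R : Matrix (Fin k) (Fin k) ℝ)
    (Sig0 : Matrix (Fin d) (Fin d) ℝ) (K : Matrix (Fin k) (Fin d) ℝ) : ℝ :=
  (Sig0 * Pmat A B Q R K).trace

/-- `E_K = (R + Bᵀ P_K B) K - Bᵀ P_K A`. -/
def Emat {d k : ℕ} (A : Matrix (Fin d) (Fin d) ℝ) (B : Matrix (Fin d) (Fin k) ℝ)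
    (Q : Matrix (Fin d) (Fin d) ℝ) (R : Matrix (Fin k) (Fin k) ℝ)
    (K : Matrix (Fin k) (Fin d) ℝ) : Matrix (Fin k) (Fin d) ℝ :=
  (R + Bᵀ * Pmat A B Q R K * B) * K - Bᵀ * Pmat A B Q R K * A

/-! ### Auxiliary lemmas -/

section AuxNorm

attribute [local instance] Matrix.linftyOpNormedAddCommGroup Matrix.linftyOpNormedRing
  Matrix.linftyOpNormedAlgebra

private lemma entry_norm_le' {d : ℕ} (N : Matrix (Fin d) (Fin d) ℂ) (i j : Fin d) :
    ‖N i j‖ ≤ ‖N‖ := by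
  have h : ‖N i j‖₊ ≤ ‖N‖₊ := by
    rw [Matrix.linfty_opNNNorm_def]
    exact le_trans (Finset.single_le_sum (f := fun j => ‖N i j‖₊) (fun _ _ => zero_le)
      (Finset.mem_univ j))
      (Finset.le_sup (f := fun i => ∑ j, ‖N i j‖₊) (Finset.mem_univ i))
  exact_mod_cast h

/-- If the spectral radius of a real matrix is less than one, then the entries of its powers
decay geometrically. -/
lemma exists_pow_bound {d : ℕ} (M : Matrix (Fin d) (Fin d) ℝ) (h : specRad M < 1) :
    ∃ C r : ℝ, 0 ≤ C ∧ 0 ≤ r ∧ r < 1 ∧ ∀ (t : ℕ) (i j : Fin d), |(M ^ t) i j| ≤ C * r ^ t := by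
  rcases Nat.eq_zero_or_pos d with hd | hd
  · exact ⟨1, 0, zero_le_one, le_refl 0, zero_lt_one, fun t i j => absurd i.2 (by omega)⟩
  haveI : Nonempty (Fin d) := ⟨⟨0, hd⟩⟩
  set N : Matrix (Fin d) (Fin d) ℂ := M.map (algebraMap ℝ ℂ) with hN
  have hbdd : BddAbove (Set.range fun μ : spectrum ℂ N => ‖(μ : ℂ)‖) := by
    refine ⟨‖N‖, ?_⟩
    rintro x ⟨⟨μ, hμ⟩, rfl⟩
    simpa using spectrum.norm_le_norm_of_mem hμ
  have hle : ∀ μ ∈ spectrum ℂ N, ‖μ‖ ≤ specRad M := fun μ hμ =>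
    le_ciSup hbdd (⟨μ, hμ⟩ : spectrum ℂ N)
  have hsr : spectralRadius ℂ N < 1 := by
    have h1 : spectralRadius ℂ N ≤ ENNReal.ofReal (specRad M) := by
      rw [spectralRadius]
      refine iSup₂_le fun μ hμ => ?_
      rw [← enorm_eq_nnnorm, ← ofReal_norm]
      exact ENNReal.ofReal_le_ofReal (by simpa using hle μ hμ)
    exact lt_of_le_of_lt h1 (ENNReal.ofReal_lt_one.mpr h)
  obtain ⟨ρ', hρ1, hρ2⟩ := exists_between hsr
  have hρ'0 : ρ' ≠ 0 := (lt_of_le_of_lt zero_le hρ1).ne'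
  have hρ'top : ρ' ≠ ⊤ := (hρ2.trans_le le_top).ne
  obtain ⟨T, hT⟩ := (Filter.eventually_atTop.mp
    ((spectrum.pow_nnnorm_pow_one_div_tendsto_nhds_spectralRadius N).eventually_lt_const hρ1))
  set r : ℝ := ρ'.toReal with hr
  have hr0 : 0 < r := ENNReal.toReal_pos hρ'0 hρ'top
  have hr1 : r < 1 := by
    have := (ENNReal.toReal_lt_toReal hρ'top ENNReal.one_ne_top).mpr hρ2
    simpa using this
  set T' : ℕ := max T 1 with hT'
  have hnorm : ∀ n, T' ≤ n → ‖N ^ n‖ ≤ r ^ n := by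
    intro n hn
    have hn1 : 1 ≤ n := le_trans (le_max_right T 1) hn
    have hx : (‖N ^ n‖₊ : ENNReal) ≤ ρ' ^ n := by
      have h := hT n (le_trans (le_max_left T 1) hn)
      have hn0 : (n : ℝ) ≠ 0 := Nat.cast_ne_zero.mpr (by omega)
      have h2 : ((‖N ^ n‖₊ : ENNReal) ^ (1 / (n:ℝ))) ^ (n : ℝ) ≤ ρ' ^ (n : ℝ) :=
        ENNReal.rpow_le_rpow h.le (Nat.cast_nonneg n)
      rwa [← ENNReal.rpow_mul, one_div, inv_mul_cancel₀ hn0, ENNReal.rpow_one,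
        ENNReal.rpow_natCast] at h2
    have := ENNReal.toReal_mono (by simp [hρ'top, ENNReal.pow_ne_top]) hx
    simpa [ENNReal.toReal_pow] using this
  set C : ℝ := 1 + ∑ n ∈ Finset.range T', ‖N ^ n‖ / r ^ n with hC
  have hsum_nonneg : ∀ n ∈ Finset.range T', 0 ≤ ‖N ^ n‖ / r ^ n := fun n _ =>
    div_nonneg (norm_nonneg _) (pow_nonneg hr0.le n)
  have hC1 : 1 ≤ C := le_add_of_nonneg_right (Finset.sum_nonneg hsum_nonneg)
  have hCb : ∀ t : ℕ, ‖N ^ t‖ ≤ C * r ^ t := by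
    intro t
    rcases lt_or_ge t T' with ht | ht
    · have h1 : ‖N ^ t‖ / r ^ t ≤ C := by
        refine le_add_of_nonneg_of_le zero_le_one ?_
        exact Finset.single_le_sum hsum_nonneg (Finset.mem_range.mpr ht)
      calc ‖N ^ t‖ = (‖N ^ t‖ / r ^ t) * r ^ t := by field_simp
        _ ≤ C * r ^ t := mul_le_mul_of_nonneg_right h1 (pow_nonneg hr0.le t)
    · exact le_trans (hnorm t ht) (le_mul_of_one_le_left (pow_nonneg hr0.le t) hC1)
  refine ⟨C, r, le_trans zero_le_one hC1, hr0.le, hr1, fun t i j => ?_⟩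
  have hmap : N ^ t = (M ^ t).map (algebraMap ℝ ℂ) := by
    rw [hN, ← RingHom.mapMatrix_apply, ← map_pow, RingHom.mapMatrix_apply]
  have heq : |(M ^ t) i j| = ‖(N ^ t) i j‖ := by
    rw [hmap]; simp [Matrix.map_apply, Complex.norm_real]
  rw [heq]
  exact le_trans (entry_norm_le' _ i j) (hCb t)

end AuxNorm

private lemma matrix_summable_of_bound {d : ℕ} {F : ℕ → Matrix (Fin d) (Fin d) ℝ} {C r : ℝ}
    (hr0 : 0 ≤ r) (hr1 : r < 1) (hb : ∀ t i j, |F t i j| ≤ C * r ^ t) : Summable F := by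
  refine Pi.summable.mpr fun i => Pi.summable.mpr fun j => ?_
  refine Summable.of_norm_bounded ((summable_geometric_of_lt_one hr0 hr1).mul_left C)
    fun t => ?_
  simpa [Real.norm_eq_abs] using hb t i j

private lemma entry_prod_bound {d : ℕ} (U X V : Matrix (Fin d) (Fin d) ℝ) (c : ℝ)
    (hU : ∀ i j, |U i j| ≤ c) (hV : ∀ i j, |V i j| ≤ c) (i j : Fin d) :
    |(U * X * V) i j| ≤ (∑ a, ∑ b, |X a b|) * c ^ 2 := by
  have hc : 0 ≤ c := le_trans (abs_nonneg _) (hU i i)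
  calc |(U * X * V) i j| = |∑ b, (∑ a, U i a * X a b) * V b j| := by
        simp [Matrix.mul_apply]
    _ ≤ ∑ b, |(∑ a, U i a * X a b) * V b j| := Finset.abs_sum_le_sum_abs _ _
    _ ≤ ∑ b, (∑ a, |X a b| * c) * c := by
        refine Finset.sum_le_sum fun b _ => ?_
        rw [abs_mul]
        refine mul_le_mul ?_ (hV b j) (abs_nonneg _) ?_
        · refine le_trans (Finset.abs_sum_le_sum_abs _ _) (Finset.sum_le_sum fun a _ => ?_)
          rw [abs_mul, mul_comm]
          exact mul_le_mul_of_nonneg_left (hU i a) (abs_nonneg _)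
        · exact Finset.sum_nonneg fun a _ => mul_nonneg (abs_nonneg _) hc
    _ = (∑ b, ∑ a, |X a b|) * c ^ 2 := by
        simp only [Finset.sum_mul]
        exact Finset.sum_congr rfl fun b _ => Finset.sum_congr rfl fun a _ => by ring
    _ = (∑ a, ∑ b, |X a b|) * c ^ 2 := by rw [Finset.sum_comm]

private lemma summable_sand1 {d : ℕ} {M : Matrix (Fin d) (Fin d) ℝ} (h : specRad M < 1)
    (X : Matrix (Fin d) (Fin d) ℝ) : Summable fun t : ℕ => (Mᵀ) ^ t * X * M ^ t := by
  obtain ⟨C, r, hC, hr0, hr1, hb⟩ := exists_pow_bound M h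
  refine matrix_summable_of_bound (C := (∑ a, ∑ b, |X a b|) * C ^ 2) (r := r ^ 2)
    (pow_nonneg hr0 2) (by nlinarith) fun t i j => ?_
  have hU : ∀ i j, |((Mᵀ) ^ t) i j| ≤ C * r ^ t := fun i j => by
    rw [← Matrix.transpose_pow, Matrix.transpose_apply]; exact hb t j i
  calc |((Mᵀ) ^ t * X * M ^ t) i j| ≤ (∑ a, ∑ b, |X a b|) * (C * r ^ t) ^ 2 :=
        entry_prod_bound _ X _ (C * r ^ t) hU (hb t) i j
    _ = (∑ a, ∑ b, |X a b|) * C ^ 2 * (r ^ 2) ^ t := by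
        rw [mul_pow, pow_right_comm]; ring

private lemma summable_sand2 {d : ℕ} {M : Matrix (Fin d) (Fin d) ℝ} (h : specRad M < 1)
    (X : Matrix (Fin d) (Fin d) ℝ) : Summable fun t : ℕ => M ^ t * X * (Mᵀ) ^ t := by
  obtain ⟨C, r, hC, hr0, hr1, hb⟩ := exists_pow_bound M h
  refine matrix_summable_of_bound (C := (∑ a, ∑ b, |X a b|) * C ^ 2) (r := r ^ 2)
    (pow_nonneg hr0 2) (by nlinarith) fun t i j => ?_
  have hU : ∀ i j, |((Mᵀ) ^ t) i j| ≤ C * r ^ t := fun i j => by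
    rw [← Matrix.transpose_pow, Matrix.transpose_apply]; exact hb t j i
  calc |(M ^ t * X * (Mᵀ) ^ t) i j| ≤ (∑ a, ∑ b, |X a b|) * (C * r ^ t) ^ 2 :=
        entry_prod_bound _ X _ (C * r ^ t) (hb t) hU i j
    _ = (∑ a, ∑ b, |X a b|) * C ^ 2 * (r ^ 2) ^ t := by
        rw [mul_pow, pow_right_comm]; ring

private def lqrMulMulHom {d : ℕ} (W V : Matrix (Fin d) (Fin d) ℝ) :
    Matrix (Fin d) (Fin d) ℝ →+ Matrix (Fin d) (Fin d) ℝ :=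
  AddMonoidHom.mk' (fun X => W * X * V)
    (fun X Y => show W * (X + Y) * V = W * X * V + W * Y * V by rw [Matrix.mul_add, Matrix.add_mul])

private lemma lqrMulMulHom_cont {d : ℕ} (W V : Matrix (Fin d) (Fin d) ℝ) :
    Continuous (lqrMulMulHom W V) :=
  (continuous_const.matrix_mul continuous_id).matrix_mul continuous_const

private lemma summable_mul_mul {d : ℕ} (W V : Matrix (Fin d) (Fin d) ℝ)
    {f : ℕ → Matrix (Fin d) (Fin d) ℝ} (hf : Summable f) :
    Summable fun t => W * f t * V :=
  hf.map (lqrMulMulHom W V) (lqrMulMulHom_cont W V)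

private lemma tsum_mul_mul {d : ℕ} (W V : Matrix (Fin d) (Fin d) ℝ)
    {f : ℕ → Matrix (Fin d) (Fin d) ℝ} (hf : Summable f) :
    ∑' t, W * f t * V = W * (∑' t, f t) * V :=
  (hf.hasSum.map (lqrMulMulHom W V) (lqrMulMulHom_cont W V)).tsum_eq

private lemma tsum_trace {d : ℕ} {f : ℕ → Matrix (Fin d) (Fin d) ℝ} (hf : Summable f) :
    ∑' t, (f t).trace = (∑' t, f t).trace := by
  let g : Matrix (Fin d) (Fin d) ℝ →+ ℝ := AddMonoidHom.mk' Matrix.trace Matrix.trace_add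
  exact (hf.hasSum.map g (continuous_id.matrix_trace)).tsum_eq

private lemma trace_tsum_mul {d : ℕ} (W V : Matrix (Fin d) (Fin d) ℝ)
    {f : ℕ → Matrix (Fin d) (Fin d) ℝ} (hf : Summable f) :
    (W * (∑' t, f t) * V).trace = ∑' t, (W * f t * V).trace := by
  rw [← tsum_mul_mul W V hf, tsum_trace (summable_mul_mul W V hf)]

/-- The Lyapunov recursion for a convergent series `∑ (Lᵀ)^t Q₀ L^t`. -/
private lemma pmat_rec {d : ℕ} (L Q0 : Matrix (Fin d) (Fin d) ℝ)
    (h : Summable fun t : ℕ => (Lᵀ) ^ t * Q0 * L ^ t) :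
    (∑' t : ℕ, (Lᵀ) ^ t * Q0 * L ^ t) = Q0 + Lᵀ * (∑' t : ℕ, (Lᵀ) ^ t * Q0 * L ^ t) * L := by
  have h1 : ∀ t : ℕ, (Lᵀ) ^ (t+1) * Q0 * L ^ (t+1) = Lᵀ * ((Lᵀ) ^ t * Q0 * L ^ t) * L := by
    intro t
    rw [pow_succ' Lᵀ t, pow_succ L t]
    simp only [Matrix.mul_assoc]
  conv_lhs => rw [Summable.tsum_eq_zero_add h]
  simp only [pow_zero, Matrix.one_mul, Matrix.mul_one]
  congr 1
  calc ∑' t : ℕ, (Lᵀ) ^ (t+1) * Q0 * L ^ (t+1)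
      = ∑' t : ℕ, Lᵀ * ((Lᵀ) ^ t * Q0 * L ^ t) * L := tsum_congr h1
    _ = Lᵀ * (∑' t : ℕ, (Lᵀ) ^ t * Q0 * L ^ t) * L := tsum_mul_mul _ _ h

/-- Telescoping identity. -/
private lemma telescope {d : ℕ} (L Q0 P : Matrix (Fin d) (Fin d) ℝ)
    (hg : Summable fun t : ℕ => (Lᵀ) ^ t * Q0 * L ^ t)
    (hf : Summable fun t : ℕ => (Lᵀ) ^ t * P * L ^ t) :
    (∑' t : ℕ, (Lᵀ) ^ t * Q0 * L ^ t) - P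
      = ∑' t : ℕ, (Lᵀ) ^ t * (Q0 + Lᵀ * P * L - P) * L ^ t := by
  have hf1 : Summable (fun t : ℕ => (Lᵀ) ^ (t+1) * P * L ^ (t+1)) :=
    (summable_nat_add_iff (f := fun t : ℕ => (Lᵀ) ^ t * P * L ^ t) 1).mpr hf
  have hterm : ∀ t : ℕ, (Lᵀ) ^ t * (Q0 + Lᵀ * P * L - P) * L ^ t
      = (Lᵀ) ^ t * Q0 * L ^ t + ((Lᵀ) ^ (t+1) * P * L ^ (t+1) - (Lᵀ) ^ t * P * L ^ t) := by
    intro t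
    rw [pow_succ Lᵀ t, pow_succ' L t]
    simp only [Matrix.mul_add, Matrix.add_mul, Matrix.mul_sub, Matrix.sub_mul, Matrix.mul_assoc]
    abel
  have h0 : ∑' t : ℕ, (Lᵀ) ^ t * P * L ^ t
      = P + ∑' t : ℕ, (Lᵀ) ^ (t+1) * P * L ^ (t+1) := by
    simpa using Summable.tsum_eq_zero_add hf
  rw [eq_comm]
  calc ∑' t : ℕ, (Lᵀ) ^ t * (Q0 + Lᵀ * P * L - P) * L ^ t
      = ∑' t : ℕ, ((Lᵀ) ^ t * Q0 * L ^ t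
          + ((Lᵀ) ^ (t+1) * P * L ^ (t+1) - (Lᵀ) ^ t * P * L ^ t)) := tsum_congr hterm
    _ = (∑' t : ℕ, (Lᵀ) ^ t * Q0 * L ^ t)
          + ((∑' t : ℕ, (Lᵀ) ^ (t+1) * P * L ^ (t+1)) - ∑' t : ℕ, (Lᵀ) ^ t * P * L ^ t) := by
        rw [Summable.tsum_add hg (hf1.sub hf), Summable.tsum_sub hf1 hf]
    _ = (∑' t : ℕ, (Lᵀ) ^ t * Q0 * L ^ t) - P := by rw [h0]; abel

/-- The key algebraic identity for the Lyapunov difference. -/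
private lemma M0_id {d k : ℕ} (A : Matrix (Fin d) (Fin d) ℝ) (B : Matrix (Fin d) (Fin k) ℝ)
    (Q : Matrix (Fin d) (Fin d) ℝ) (R : Matrix (Fin k) (Fin k) ℝ)
    (P : Matrix (Fin d) (Fin d) ℝ) (K K' : Matrix (Fin k) (Fin d) ℝ)
    (hPt : Pᵀ = P) (hRt : Rᵀ = R) :
    (Q + K'ᵀ * R * K' + (A - B * K')ᵀ * P * (A - B * K')) -
      (Q + Kᵀ * R * K + (A - B * K)ᵀ * P * (A - B * K)) =
    -((K - K')ᵀ * ((R + Bᵀ * P * B) * K - Bᵀ * P * A)) -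
      ((R + Bᵀ * P * B) * K - Bᵀ * P * A)ᵀ * (K - K') +
      (K - K')ᵀ * (R + Bᵀ * P * B) * (K - K') := by
  simp only [sub_eq_add_neg, transpose_add, transpose_neg, transpose_mul, transpose_transpose,
    hPt, hRt, mul_add, add_mul, neg_mul, mul_neg, Matrix.mul_add, Matrix.add_mul,
    Matrix.neg_mul, Matrix.mul_neg, neg_neg, neg_add, mul_assoc, Matrix.mul_assoc]
  abel

private lemma trace_shuffle {d : ℕ} (S U X V : Matrix (Fin d) (Fin d) ℝ) :
    (S * (U * X * V)).trace = ((V * S * U) * X).trace := by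
  rw [show S * (U * X * V) = (S * U * X) * V from by simp only [Matrix.mul_assoc],
    Matrix.trace_mul_comm, show V * (S * U * X) = (V * S * U) * X from by
      simp only [Matrix.mul_assoc]]

/-- "Almost" smoothness. -/
theorem almost_smoothness {d k : ℕ}
    (A : Matrix (Fin d) (Fin d) ℝ) (B : Matrix (Fin d) (Fin k) ℝ)
    (Q : Matrix (Fin d) (Fin d) ℝ) (R : Matrix (Fin k) (Fin k) ℝ)
    (Sig0 : Matrix (Fin d) (Fin d) ℝ)
    (hQ : Q.PosDef) (hR : R.PosDef) (hSig0 : Sig0.PosSemidef)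
    (K K' : Matrix (Fin k) (Fin d) ℝ)
    (hK : specRad (A - B * K) < 1) (hK' : specRad (A - B * K') < 1) :
    Cost A B Q R Sig0 K' - Cost A B Q R Sig0 K =
      -2 * (SigmaMat A B Sig0 K' * (K - K')ᵀ * Emat A B Q R K).trace +
        (SigmaMat A B Sig0 K' * (K - K')ᵀ * (R + Bᵀ * Pmat A B Q R K * B) *
          (K - K')).trace := by
  have hQt : Qᵀ = Q := by
    rw [← Matrix.conjTranspose_eq_transpose_of_trivial]; exact hQ.1
  have hRt : Rᵀ = R := by
    rw [← Matrix.conjTranspose_eq_transpose_of_trivial]; exact hR.1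
  have hSt : Sig0ᵀ = Sig0 := by
    rw [← Matrix.conjTranspose_eq_transpose_of_trivial]; exact hSig0.1
  -- summability facts
  have hsumQK : Summable (fun t : ℕ =>
      ((A - B * K)ᵀ) ^ t * (Q + Kᵀ * R * K) * (A - B * K) ^ t) := summable_sand1 hK _
  have hsumQK' : Summable (fun t : ℕ =>
      ((A - B * K')ᵀ) ^ t * (Q + K'ᵀ * R * K') * (A - B * K') ^ t) := summable_sand1 hK' _
  have hsumP : Summable (fun t : ℕ =>
      ((A - B * K')ᵀ) ^ t * Pmat A B Q R K * (A - B * K') ^ t) := summable_sand1 hK' _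
  have hsumS : Summable (fun t : ℕ =>
      (A - B * K') ^ t * Sig0 * ((A - B * K')ᵀ) ^ t) := summable_sand2 hK' _
  -- recursion for P
  have hPrec : Pmat A B Q R K
      = (Q + Kᵀ * R * K) + (A - B * K)ᵀ * Pmat A B Q R K * (A - B * K) := by
    rw [Pmat]; exact pmat_rec _ _ hsumQK
  -- symmetry of P
  have hPt : (Pmat A B Q R K)ᵀ = Pmat A B Q R K := by
    rw [Pmat, Matrix.transpose_tsum]
    refine tsum_congr fun t => ?_
    simp only [Matrix.transpose_mul, Matrix.transpose_pow, Matrix.transpose_transpose,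
      Matrix.transpose_add, hQt, hRt, Matrix.mul_assoc]
  -- symmetry of Σ'
  have hSt' : (SigmaMat A B Sig0 K')ᵀ = SigmaMat A B Sig0 K' := by
    rw [SigmaMat, Matrix.transpose_tsum]
    refine tsum_congr fun t => ?_
    simp only [Matrix.transpose_mul, Matrix.transpose_pow, Matrix.transpose_transpose,
      hSt, Matrix.mul_assoc]
  -- the Lyapunov difference
  have key : Pmat A B Q R K' - Pmat A B Q R K
      = ∑' t : ℕ, ((A - B * K')ᵀ) ^ t *
          ((Q + K'ᵀ * R * K') + (A - B * K')ᵀ * Pmat A B Q R K * (A - B * K')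
            - Pmat A B Q R K) * (A - B * K') ^ t := by
    conv_lhs => rw [Pmat]
    exact telescope (A - B * K') (Q + K'ᵀ * R * K') (Pmat A B Q R K) hsumQK' hsumP
  have hM₀sum : Summable (fun t : ℕ => ((A - B * K')ᵀ) ^ t *
      ((Q + K'ᵀ * R * K') + (A - B * K')ᵀ * Pmat A B Q R K * (A - B * K')
        - Pmat A B Q R K) * (A - B * K') ^ t) := summable_sand1 hK' _
  -- the M₀ identity
  have hM0form : (Q + K'ᵀ * R * K') + (A - B * K')ᵀ * Pmat A B Q R K * (A - B * K')
        - Pmat A B Q R K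
      = -((K - K')ᵀ * Emat A B Q R K) - (Emat A B Q R K)ᵀ * (K - K')
        + (K - K')ᵀ * (R + Bᵀ * Pmat A B Q R K * B) * (K - K') := by
    have h1 : (Q + K'ᵀ * R * K') + (A - B * K')ᵀ * Pmat A B Q R K * (A - B * K')
          - Pmat A B Q R K
        = (Q + K'ᵀ * R * K' + (A - B * K')ᵀ * Pmat A B Q R K * (A - B * K')) -
          (Q + Kᵀ * R * K + (A - B * K)ᵀ * Pmat A B Q R K * (A - B * K)) :=
      congrArg (fun z => (Q + K'ᵀ * R * K'
        + (A - B * K')ᵀ * Pmat A B Q R K * (A - B * K')) - z) hPrec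
    rw [h1, Emat]
    exact M0_id A B Q R (Pmat A B Q R K) K K' hPt hRt
  -- cost difference as a single trace
  have costdiff : Cost A B Q R Sig0 K' - Cost A B Q R Sig0 K
      = (SigmaMat A B Sig0 K' *
          ((Q + K'ᵀ * R * K') + (A - B * K')ᵀ * Pmat A B Q R K * (A - B * K')
            - Pmat A B Q R K)).trace := by
    rw [Cost, Cost, ← Matrix.trace_sub, ← Matrix.mul_sub, key]
    rw [show (Sig0 * ∑' t : ℕ, ((A - B * K')ᵀ) ^ t *
        ((Q + K'ᵀ * R * K') + (A - B * K')ᵀ * Pmat A B Q R K * (A - B * K')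
          - Pmat A B Q R K) * (A - B * K') ^ t).trace
        = ∑' t : ℕ, (Sig0 * (((A - B * K')ᵀ) ^ t *
            ((Q + K'ᵀ * R * K') + (A - B * K')ᵀ * Pmat A B Q R K * (A - B * K')
              - Pmat A B Q R K) * (A - B * K') ^ t)).trace from by
      simpa [Matrix.mul_one] using trace_tsum_mul Sig0 1 hM₀sum]
    rw [tsum_congr fun t => trace_shuffle Sig0 (((A - B * K')ᵀ) ^ t) _ ((A - B * K') ^ t)]
    rw [show (∑' t : ℕ, ((A - B * K') ^ t * Sig0 * ((A - B * K')ᵀ) ^ t *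
        ((Q + K'ᵀ * R * K') + (A - B * K')ᵀ * Pmat A B Q R K * (A - B * K')
          - Pmat A B Q R K)).trace)
        = ((∑' t : ℕ, (A - B * K') ^ t * Sig0 * ((A - B * K')ᵀ) ^ t) *
            ((Q + K'ᵀ * R * K') + (A - B * K')ᵀ * Pmat A B Q R K * (A - B * K')
              - Pmat A B Q R K)).trace from by
      simpa [Matrix.one_mul] using (trace_tsum_mul 1 _ hsumS).symm]
    rw [SigmaMat]
  obtain ⟨D, hD⟩ : ∃ D, K - K' = D := ⟨_, rfl⟩
  obtain ⟨G, hG⟩ : ∃ G, R + Bᵀ * Pmat A B Q R K * B = G := ⟨_, rfl⟩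
  rw [costdiff, hM0form, hD, hG]
  have swap : (SigmaMat A B Sig0 K' * (Emat A B Q R K)ᵀ * D).trace
      = (SigmaMat A B Sig0 K' * Dᵀ * Emat A B Q R K).trace := by
    conv_lhs => rw [← Matrix.trace_transpose]
    rw [show (SigmaMat A B Sig0 K' * (Emat A B Q R K)ᵀ * D)ᵀ
        = Dᵀ * (Emat A B Q R K * (SigmaMat A B Sig0 K')ᵀ) from by
      simp only [Matrix.transpose_mul, Matrix.transpose_transpose, Matrix.mul_assoc]]
    rw [hSt', show Dᵀ * (Emat A B Q R K * SigmaMat A B Sig0 K')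
        = (Dᵀ * Emat A B Q R K) * SigmaMat A B Sig0 K' from by simp only [Matrix.mul_assoc],
      Matrix.trace_mul_comm]
    simp only [Matrix.mul_assoc]
  simp only [Matrix.mul_add, Matrix.mul_sub, Matrix.mul_neg, Matrix.trace_add,
    Matrix.trace_sub, Matrix.trace_neg, ← Matrix.mul_assoc]
  rw [swap]
  ring
end
end

section
/- (Trace lower bound near instability.) Suppose μ := σ_min(Σ₀) > 0. For any stabilizing gain K′ (so ρ(A−BK′) < 1), the state correlation matrix satisfies Tr(Σ_{K′}) ≥ μ / (2 (1 − ρ(A−BK′))). -/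
open Matrix

noncomputable section

/-! ### Auxiliary lemmas -/

section Aux
open Filter

/-- Cauchy–Schwarz bound: any eigenvalue is bounded by the Frobenius quantity. -/
lemma aux_abs_eig_le {d : ℕ} {M : Matrix (Fin d) (Fin d) ℂ} {lam : ℂ} {v : Fin d → ℂ}
    (hv : v ≠ 0) (h : M *ᵥ v = lam • v) :
    ‖lam‖ ≤ Real.sqrt (∑ i, ∑ j, ‖M i j‖ ^ 2) := by
  classical
  set S : ℝ := ∑ j, ‖v j‖ ^ 2 with hSdef
  have hS0 : 0 < S := by
    obtain ⟨j, hj⟩ := Function.ne_iff.mp hv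
    refine Finset.sum_pos' (fun i _ => sq_nonneg _) ⟨j, Finset.mem_univ _, ?_⟩
    have h0 : 0 < ‖v j‖ := by
      exact norm_pos_iff.mpr hj
    positivity
  have hrow : ∀ i, ‖lam‖ ^ 2 * ‖v i‖ ^ 2
      ≤ (∑ j, ‖M i j‖ ^ 2) * S := by
    intro i
    have h1 : ‖(M *ᵥ v) i‖ ≤ ∑ j, ‖M i j‖ * ‖v j‖ := by
      calc ‖(M *ᵥ v) i‖ = ‖∑ j, M i j * v j‖ := by
            simp [Matrix.mulVec, dotProduct]
      _ ≤ ∑ j, ‖M i j * v j‖ := norm_sum_le _ _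
      _ = ∑ j, ‖M i j‖ * ‖v j‖ := by simp [norm_mul]
    have h2 : (∑ j, ‖M i j‖ * ‖v j‖) ^ 2
        ≤ (∑ j, ‖M i j‖ ^ 2) * S := Finset.sum_mul_sq_le_sq_mul_sq _ _ _
    have h3 : ‖(M *ᵥ v) i‖ ^ 2 ≤ (∑ j, ‖M i j‖ ^ 2) * S :=
      le_trans (pow_le_pow_left₀ (norm_nonneg _) h1 2) h2
    have h4 : (M *ᵥ v) i = lam * v i := by rw [h]; rfl
    rwa [h4, norm_mul, mul_pow] at h3
  have hsum : ‖lam‖ ^ 2 * S ≤ (∑ i, ∑ j, ‖M i j‖ ^ 2) * S := by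
    calc ‖lam‖ ^ 2 * S = ∑ i, ‖lam‖ ^ 2 * ‖v i‖ ^ 2 := by
          rw [hSdef, Finset.mul_sum]
    _ ≤ ∑ i, (∑ j, ‖M i j‖ ^ 2) * S := Finset.sum_le_sum fun i _ => hrow i
    _ = (∑ i, ∑ j, ‖M i j‖ ^ 2) * S := by rw [← Finset.sum_mul]
  have h5 : ‖lam‖ ^ 2 ≤ ∑ i, ∑ j, ‖M i j‖ ^ 2 :=
    le_of_mul_le_mul_right hsum hS0
  have h6 : (0:ℝ) ≤ ∑ i, ∑ j, ‖M i j‖ ^ 2 :=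
    Finset.sum_nonneg fun i _ => Finset.sum_nonneg fun j _ => sq_nonneg _
  exact (Real.le_sqrt (norm_nonneg _) h6).mpr h5

/-- Any element of the spectrum of a complex matrix admits an eigenvector. -/
lemma aux_exists_eigvec {d : ℕ} {M : Matrix (Fin d) (Fin d) ℂ} {lam : ℂ}
    (h : lam ∈ spectrum ℂ M) : ∃ v : Fin d → ℂ, v ≠ 0 ∧ M *ᵥ v = lam • v := by
  rw [← AlgEquiv.spectrum_eq (Matrix.toLinAlgEquiv' :
      Matrix (Fin d) (Fin d) ℂ ≃ₐ[ℂ] _) M] at h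
  have h' : Module.End.HasEigenvalue (Matrix.toLinAlgEquiv' M) lam :=
    Module.End.hasEigenvalue_iff_mem_spectrum.mpr h
  obtain ⟨v, hv⟩ := h'.exists_hasEigenvector
  refine ⟨v, hv.2, ?_⟩
  have h2 := hv.apply_eq_smul
  rwa [Matrix.toLinAlgEquiv'_apply] at h2

lemma aux_pow_eigvec {d : ℕ} {M : Matrix (Fin d) (Fin d) ℂ} {lam : ℂ} {v : Fin d → ℂ}
    (h : M *ᵥ v = lam • v) (t : ℕ) : (M ^ t) *ᵥ v = (lam ^ t) • v := by
  induction t with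
  | zero => simp
  | succ n ih =>
      have : (M ^ (n + 1)) *ᵥ v = (M ^ n) *ᵥ (M *ᵥ v) := by
        rw [Matrix.mulVec_mulVec, ← pow_succ]
      rw [this, h, Matrix.mulVec_smul, ih, smul_smul, pow_succ, mul_comm]

lemma aux_map_pow {d : ℕ} (L : Matrix (Fin d) (Fin d) ℝ) (t : ℕ) :
    (L ^ t).map (algebraMap ℝ ℂ) = (L.map (algebraMap ℝ ℂ)) ^ t := by
  rw [← RingHom.mapMatrix_apply, ← RingHom.mapMatrix_apply, map_pow]

lemma aux_abs_pow_le_frob {d : ℕ} (L : Matrix (Fin d) (Fin d) ℝ) {lam : ℂ}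
    (h : lam ∈ spectrum ℂ (L.map (algebraMap ℝ ℂ))) (t : ℕ) :
    ‖lam‖ ^ t ≤ frobNorm (L ^ t) := by
  obtain ⟨v, hv0, hv⟩ := aux_exists_eigvec h
  have h2 := aux_pow_eigvec hv t
  have h4 := aux_abs_eig_le hv0 h2
  rw [← aux_map_pow] at h4
  calc ‖lam‖ ^ t = ‖lam ^ t‖ := (norm_pow _ _).symm
  _ ≤ Real.sqrt (∑ i, ∑ j, ‖((L ^ t).map (algebraMap ℝ ℂ)) i j‖ ^ 2) := h4
  _ = frobNorm (L ^ t) := by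
      simp only [frobNorm]
      congr 1
      refine Finset.sum_congr rfl fun i _ => Finset.sum_congr rfl fun j _ => ?_
      simp [Matrix.map_apply, sq_abs]

lemma aux_specRad_nonneg {d : ℕ} (L : Matrix (Fin d) (Fin d) ℝ) : 0 ≤ specRad L := by
  simp only [specRad]
  exact Real.iSup_nonneg fun _ => norm_nonneg _

lemma aux_pow_specRad_le_frobNorm {d : ℕ} (hd : 0 < d) (L : Matrix (Fin d) (Fin d) ℝ)
    (t : ℕ) : specRad L ^ t ≤ frobNorm (L ^ t) := by
  rcases Nat.eq_zero_or_pos t with rfl | ht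
  · rw [pow_zero, pow_zero]
    have h1 : ∀ i j : Fin d, (((1 : Matrix (Fin d) (Fin d) ℝ)) i j) ^ 2
        = if i = j then (1 : ℝ) else 0 := by
      intro i j
      by_cases h : i = j <;> simp [Matrix.one_apply, h]
    simp only [frobNorm, h1]
    rw [show (∑ i : Fin d, ∑ j : Fin d, if i = j then (1:ℝ) else 0) = (d : ℝ) by
      simp [Finset.sum_ite_eq]]
    calc (1:ℝ) = Real.sqrt 1 := Real.sqrt_one.symm
    _ ≤ Real.sqrt d := Real.sqrt_le_sqrt (by exact_mod_cast hd)
  · have hN : 0 ≤ frobNorm (L ^ t) := Real.sqrt_nonneg _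
    have htne : (t : ℝ) ≠ 0 := by exact_mod_cast ht.ne'
    have key : specRad L ≤ frobNorm (L ^ t) ^ ((t : ℝ)⁻¹) := by
      simp only [specRad]
      refine Real.iSup_le (fun lam => ?_) (Real.rpow_nonneg hN _)
      have h1 : ‖(lam.1 : ℂ)‖ ^ t ≤ frobNorm (L ^ t) := aux_abs_pow_le_frob L lam.2 t
      have h2 : ((‖(lam.1 : ℂ)‖ ^ t : ℝ)) ^ ((t:ℝ)⁻¹)
          ≤ frobNorm (L ^ t) ^ ((t:ℝ)⁻¹) :=
        Real.rpow_le_rpow (by positivity) h1 (by positivity)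
      calc ‖(lam.1 : ℂ)‖ = ((‖(lam.1 : ℂ)‖ ^ t : ℝ)) ^ ((t:ℝ)⁻¹) := by
            rw [← Real.rpow_natCast (‖(lam.1 : ℂ)‖) t,
              ← Real.rpow_mul (norm_nonneg _), mul_inv_cancel₀ htne,
              Real.rpow_one]
      _ ≤ _ := h2
    calc specRad L ^ t ≤ (frobNorm (L ^ t) ^ ((t:ℝ)⁻¹)) ^ t :=
          pow_le_pow_left₀ (aux_specRad_nonneg L) key t
    _ = frobNorm (L ^ t) := by
          rw [← Real.rpow_natCast (frobNorm (L ^ t) ^ ((t:ℝ)⁻¹)) t, ← Real.rpow_mul hN,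
            inv_mul_cancel₀ htne, Real.rpow_one]

section Gelfand

attribute [local instance] Matrix.linftyOpNormedAddCommGroup Matrix.linftyOpNormedRing
  Matrix.linftyOpNormedSpace Matrix.linftyOpNormedAlgebra

lemma aux_eventually_pow_entry_le {d : ℕ} {L : Matrix (Fin d) (Fin d) ℝ} {r : ℝ}
    (hr0 : 0 < r) (hρr : specRad L < r) :
    ∀ᶠ t in Filter.atTop, ∀ i j, |(L ^ t) i j| ≤ r ^ t := by
  classical
  set Lc : Matrix (Fin d) (Fin d) ℂ := L.map (algebraMap ℝ ℂ) with hLc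
  have hbdd : BddAbove (Set.range fun (μ : spectrum ℂ Lc) => ‖(μ : ℂ)‖) := by
    refine ⟨Real.sqrt (∑ i, ∑ j, ‖Lc i j‖ ^ 2), ?_⟩
    rintro x ⟨lam, rfl⟩
    obtain ⟨v, hv0, hv⟩ := aux_exists_eigvec lam.2
    exact aux_abs_eig_le hv0 hv
  have hspec : ∀ lam ∈ spectrum ℂ Lc, ‖lam‖ ≤ specRad L := by
    intro lam hlam
    simp only [specRad]
    exact le_ciSup hbdd ⟨lam, hlam⟩
  have hsr : spectralRadius ℂ Lc ≤ ENNReal.ofReal (specRad L) := by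
    simp only [spectralRadius]
    refine iSup₂_le fun k hk => ?_
    rw [← enorm_eq_nnnorm, ← ofReal_norm]
    exact ENNReal.ofReal_le_ofReal (hspec k hk)
  have hlim := spectrum.pow_nnnorm_pow_one_div_tendsto_nhds_spectralRadius Lc
  have hlt : spectralRadius ℂ Lc < ENNReal.ofReal r :=
    lt_of_le_of_lt hsr (by rw [ENNReal.ofReal_lt_ofReal_iff hr0]; exact hρr)
  have hev := hlim.eventually_lt_const hlt
  filter_upwards [hev, Filter.eventually_ge_atTop 1] with t ht ht1
  have htne : (t : ℝ) ≠ 0 := by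
    have : (0:ℕ) < t := ht1
    exact_mod_cast this.ne'
  have hx : (‖Lc ^ t‖₊ : ENNReal) ≤ ENNReal.ofReal r ^ t := by
    have h1 := ENNReal.rpow_le_rpow ht.le (by positivity : (0:ℝ) ≤ (t:ℝ))
    rw [← ENNReal.rpow_mul, one_div, inv_mul_cancel₀ htne, ENNReal.rpow_one] at h1
    rwa [ENNReal.rpow_natCast] at h1
  have hnorm : ‖Lc ^ t‖ ≤ r ^ t := by
    rw [← enorm_eq_nnnorm, ← ofReal_norm, ← ENNReal.ofReal_pow hr0.le] at hx
    exact (ENNReal.ofReal_le_ofReal_iff (by positivity)).mp hx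
  intro i j
  have hentry : ‖(Lc ^ t) i j‖₊ ≤ ‖Lc ^ t‖₊ := by
    rw [Matrix.linfty_opNNNorm_def]
    exact le_trans
      (Finset.single_le_sum (f := fun j' => ‖(Lc ^ t) i j'‖₊) (fun j' _ => zero_le)
        (Finset.mem_univ j))
      (Finset.le_sup (f := fun i => ∑ j : Fin d, ‖(Lc ^ t) i j‖₊) (Finset.mem_univ i))
  have hentry' : ‖(Lc ^ t) i j‖ ≤ ‖Lc ^ t‖ := by
    rw [← coe_nnnorm, ← coe_nnnorm]
    exact_mod_cast hentry
  have heq : |(L ^ t) i j| = ‖(Lc ^ t) i j‖ := by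
    rw [hLc, ← aux_map_pow]
    simp [Matrix.map_apply]
  rw [heq]
  exact hentry'.trans hnorm

end Gelfand

/-- Rayleigh-type lower bound for a real symmetric matrix. -/
lemma aux_rayleigh_lower {d : ℕ} {H : Matrix (Fin d) (Fin d) ℝ} (hH : H.IsHermitian)
    (x : Fin d → ℝ) :
    (⨅ i, hH.eigenvalues i) * (x ⬝ᵥ x) ≤ x ⬝ᵥ H *ᵥ x := by
  classical
  set V : Matrix (Fin d) (Fin d) ℝ := (hH.eigenvectorUnitary : Matrix (Fin d) (Fin d) ℝ)
    with hV
  have hV1 : V * star V = 1 := Matrix.mem_unitaryGroup_iff.mp hH.eigenvectorUnitary.2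
  have hVT : star V = Vᵀ := by
    rw [Matrix.star_eq_conjTranspose, Matrix.conjTranspose_eq_transpose_of_trivial]
  have hspec : H = V * Matrix.diagonal hH.eigenvalues * Vᵀ := by
    have h0 := hH.spectral_theorem
    rw [RCLike.ofReal_real_eq_id, Function.id_comp, Unitary.conjStarAlgAut_apply, hVT] at h0
    exact h0
  set y : Fin d → ℝ := x ᵥ* V with hy
  have hyy : y ⬝ᵥ y = x ⬝ᵥ x := by
    calc y ⬝ᵥ y = (x ᵥ* V) ⬝ᵥ (Vᵀ *ᵥ x) := by rw [Matrix.mulVec_transpose]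
    _ = ((x ᵥ* V) ᵥ* Vᵀ) ⬝ᵥ x := Matrix.dotProduct_mulVec _ _ _
    _ = (x ᵥ* (V * Vᵀ)) ⬝ᵥ x := by rw [Matrix.vecMul_vecMul]
    _ = x ⬝ᵥ x := by rw [← hVT, hV1, Matrix.vecMul_one]
  have hmain : x ⬝ᵥ H *ᵥ x = ∑ i, hH.eigenvalues i * (y i * y i) := by
    conv_lhs => rw [hspec]
    rw [← Matrix.mulVec_mulVec, ← Matrix.mulVec_mulVec,
      Matrix.dotProduct_mulVec x V _, Matrix.mulVec_transpose, ← hy]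
    rw [dotProduct]
    refine Finset.sum_congr rfl fun i _ => ?_
    rw [Matrix.mulVec_diagonal]
    ring
  rw [hmain, ← hyy, dotProduct, Finset.mul_sum]
  refine Finset.sum_le_sum fun i _ => ?_
  have h1 : (⨅ j, hH.eigenvalues j) ≤ hH.eigenvalues i :=
    ciInf_le (Finite.bddBelow_range _) i
  exact mul_le_mul_of_nonneg_right h1 (mul_self_nonneg _)

/-- The quadratic form of a PSD matrix dominates `σ_min` times the norm. -/
lemma aux_sigmaMin_dot_le {d : ℕ} (hd : 0 < d) {S : Matrix (Fin d) (Fin d) ℝ}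
    (hS : S.PosSemidef) (x : Fin d → ℝ) :
    sigmaMin S * (x ⬝ᵥ x) ≤ x ⬝ᵥ S *ᵥ x := by
  classical
  haveI : Nonempty (Fin d) := Fin.pos_iff_nonempty.mp hd
  have hH : S.IsHermitian := hS.1
  have hG := Matrix.isHermitian_conjTranspose_mul_self S
  set V : Matrix (Fin d) (Fin d) ℝ := (hH.eigenvectorUnitary : Matrix (Fin d) (Fin d) ℝ)
    with hV
  have hVT : star V = Vᵀ := by
    rw [Matrix.star_eq_conjTranspose, Matrix.conjTranspose_eq_transpose_of_trivial]
  have hV1' : star V * V = 1 := Matrix.mem_unitaryGroup_iff'.mp hH.eigenvectorUnitary.2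
  have hspec : S * V = V * Matrix.diagonal hH.eigenvalues := by
    have h0 := hH.spectral_theorem
    rw [RCLike.ofReal_real_eq_id, Function.id_comp, Unitary.conjStarAlgAut_apply] at h0
    calc S * V = V * Matrix.diagonal hH.eigenvalues * star V * V := by rw [← h0]
    _ = V * Matrix.diagonal hH.eigenvalues * (star V * V) := by rw [mul_assoc]
    _ = _ := by rw [hV1', mul_one]
  have key : ∀ i, sigmaMin S ≤ hH.eigenvalues i := by
    intro i
    set v : Fin d → ℝ := fun p => V p i with hv
    have hv1 : v ⬝ᵥ v = 1 := by
      have h2 : (star V * V) i i = (1 : Matrix (Fin d) (Fin d) ℝ) i i := by rw [hV1']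
      rw [hVT] at h2
      simpa [Matrix.mul_apply, Matrix.one_apply, dotProduct, hv,
        Matrix.transpose_apply] using h2
    have hSv : S *ᵥ v = hH.eigenvalues i • v := by
      funext j
      have h2 : (S * V) j i = (V * Matrix.diagonal hH.eigenvalues) j i := by rw [hspec]
      simp only [Matrix.mul_apply, Matrix.diagonal_apply, mul_ite, mul_zero,
        Finset.sum_ite_eq, Finset.mem_univ, if_true] at h2
      simpa [Matrix.mulVec, dotProduct, hv, mul_comm] using h2
    have h1 := aux_rayleigh_lower hG v
    have h2 : v ⬝ᵥ (Sᴴ * S) *ᵥ v = (hH.eigenvalues i) ^ 2 := by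
      rw [Matrix.conjTranspose_eq_transpose_of_trivial]
      have h3 : v ⬝ᵥ (Sᵀ * S) *ᵥ v = (S *ᵥ v) ⬝ᵥ (S *ᵥ v) := by
        rw [← Matrix.mulVec_mulVec, Matrix.dotProduct_mulVec, Matrix.vecMul_transpose]
      rw [h3, hSv, smul_dotProduct, dotProduct_smul, smul_eq_mul, smul_eq_mul, hv1]
      ring
    rw [hv1, mul_one, h2] at h1
    have h3 : sigmaMin S ≤ |hH.eigenvalues i| := by
      simp only [sigmaMin]
      rw [← Real.sqrt_sq_eq_abs]
      exact Real.sqrt_le_sqrt h1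
    exact h3.trans_eq (abs_of_nonneg (hS.eigenvalues_nonneg i))
  have h4 : sigmaMin S ≤ ⨅ i, hH.eigenvalues i := le_ciInf key
  have h5 := aux_rayleigh_lower hH x
  have hxx : 0 ≤ x ⬝ᵥ x := Finset.sum_nonneg fun i _ => mul_self_nonneg _
  exact le_trans (mul_le_mul_of_nonneg_right h4 hxx) h5

lemma aux_trace_bound {d : ℕ} (hd : 0 < d) {S : Matrix (Fin d) (Fin d) ℝ}
    (hS : S.PosSemidef) (M : Matrix (Fin d) (Fin d) ℝ) :
    sigmaMin S * (∑ i, ∑ j, (M i j) ^ 2) ≤ (M * S * Mᵀ).trace := by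
  classical
  have htr : (M * S * Mᵀ).trace = ∑ i, (fun j => M i j) ⬝ᵥ S *ᵥ (fun j => M i j) := by
    refine Finset.sum_congr rfl fun i _ => ?_
    simp only [Matrix.diag_apply, Matrix.mul_apply, Matrix.transpose_apply,
      dotProduct, Matrix.mulVec, Finset.sum_mul, Finset.mul_sum]
    rw [Finset.sum_comm]
    exact Finset.sum_congr rfl fun p _ => Finset.sum_congr rfl fun q _ => by ring
  rw [htr, Finset.mul_sum]
  refine Finset.sum_le_sum fun i _ => ?_
  have h1 := aux_sigmaMin_dot_le hd hS (fun j => M i j)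
  have hdd : (fun j => M i j) ⬝ᵥ (fun j => M i j) = ∑ j, (M i j) ^ 2 := by
    simp [dotProduct, sq]
  rwa [hdd] at h1

end Aux

/-- Trace lower bound near instability. -/
theorem trace_lower_bound_near_instability {d k : ℕ}
    (A : Matrix (Fin d) (Fin d) ℝ) (B : Matrix (Fin d) (Fin k) ℝ)
    (Sig0 : Matrix (Fin d) (Fin d) ℝ)
    (hSig0 : Sig0.PosSemidef) (hmu : 0 < sigmaMin Sig0)
    (K' : Matrix (Fin k) (Fin d) ℝ) (hK' : specRad (A - B * K') < 1) :
    sigmaMin Sig0 / (2 * (1 - specRad (A - B * K'))) ≤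
      (SigmaMat A B Sig0 K').trace := by
  classical
  rcases Nat.eq_zero_or_pos d with hd0 | hd
  · exfalso
    subst hd0
    have h0 : sigmaMin Sig0 = 0 := by
      simp only [sigmaMin]
      rw [Real.iInf_of_isEmpty (ι := Fin 0), Real.sqrt_zero]
    rw [h0] at hmu
    exact lt_irrefl 0 hmu
  set L : Matrix (Fin d) (Fin d) ℝ := A - B * K' with hLdef
  set ρ : ℝ := specRad L with hρdef
  have hρ0 : 0 ≤ ρ := aux_specRad_nonneg L
  have hρ1 : ρ < 1 := hK'
  set μ : ℝ := sigmaMin Sig0 with hμdef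
  have hμ0 : 0 < μ := hmu
  set f : ℕ → Matrix (Fin d) (Fin d) ℝ := fun t => L ^ t * Sig0 * (L ^ t)ᵀ with hfdef
  have hSM : SigmaMat A B Sig0 K' = ∑' t, f t := by
    simp only [SigmaMat, hfdef, ← hLdef]
    refine tsum_congr fun t => ?_
    rw [Matrix.transpose_pow]
  set r : ℝ := (1 + ρ) / 2 with hrdef
  have hr0 : 0 < r := by rw [hrdef]; linarith
  have hρr : ρ < r := by rw [hrdef]; linarith
  have hr1 : r < 1 := by rw [hrdef]; linarith
  have hr21 : r ^ 2 < 1 := by nlinarith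
  have hev := aux_eventually_pow_entry_le hr0 hρr
  set C : ℝ := ∑ p, ∑ q, |Sig0 p q| with hC
  have hentry : ∀ i j, ∀ᶠ t in Filter.atTop, |f t i j| ≤ C * ((r ^ 2) ^ t) := by
    intro i j
    filter_upwards [hev] with t ht
    have h1 : |f t i j| ≤ ∑ p, ∑ q, |(L ^ t) i p| * |Sig0 p q| * |(L ^ t) j q| := by
      calc |f t i j| = |∑ q, (∑ p, (L ^ t) i p * Sig0 p q) * (L ^ t) j q| := by
            simp only [hfdef, Matrix.mul_apply, Matrix.transpose_apply]
      _ ≤ ∑ q, |(∑ p, (L ^ t) i p * Sig0 p q) * (L ^ t) j q| :=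
            Finset.abs_sum_le_sum_abs _ _
      _ ≤ ∑ q, (∑ p, |(L ^ t) i p * Sig0 p q|) * |(L ^ t) j q| := by
            refine Finset.sum_le_sum fun q _ => ?_
            rw [abs_mul]
            exact mul_le_mul_of_nonneg_right (Finset.abs_sum_le_sum_abs _ _) (abs_nonneg _)
      _ = ∑ q, ∑ p, |(L ^ t) i p| * |Sig0 p q| * |(L ^ t) j q| := by
            refine Finset.sum_congr rfl fun q _ => ?_
            rw [Finset.sum_mul]
            exact Finset.sum_congr rfl fun p _ => by rw [abs_mul]
      _ = ∑ p, ∑ q, |(L ^ t) i p| * |Sig0 p q| * |(L ^ t) j q| := Finset.sum_comm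
    have h2 : ∑ p, ∑ q, |(L ^ t) i p| * |Sig0 p q| * |(L ^ t) j q|
        ≤ ∑ p, ∑ q, |Sig0 p q| * (r ^ t * r ^ t) := by
      refine Finset.sum_le_sum fun p _ => Finset.sum_le_sum fun q _ => ?_
      have ha := ht i p
      have hb := ht j q
      have h3 : |(L ^ t) i p| * |Sig0 p q| * |(L ^ t) j q| ≤ r ^ t * |Sig0 p q| * r ^ t :=
        mul_le_mul (mul_le_mul_of_nonneg_right ha (abs_nonneg _)) hb (abs_nonneg _)
          (by positivity)
      exact h3.trans_eq (by ring)
    have h4 : ∑ p, ∑ q, |Sig0 p q| * (r ^ t * r ^ t) = C * (r ^ 2) ^ t := by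
      have h5 : (r ^ 2) ^ t = r ^ t * r ^ t := by
        rw [← pow_mul, two_mul, pow_add]
      rw [h5, hC, Finset.sum_mul]
      exact Finset.sum_congr rfl fun p _ => (Finset.sum_mul _ _ _).symm
    exact h1.trans (h2.trans_eq h4)
  have hsum_entry : ∀ i j, Summable fun t => f t i j := by
    intro i j
    refine Summable.of_norm_bounded_eventually_nat
      ((summable_geometric_of_lt_one (by positivity) hr21).mul_left C) ?_
    simpa [Real.norm_eq_abs] using hentry i j
  have hsum_mat : Summable f := Pi.summable.mpr fun i => Pi.summable.mpr fun j =>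
    hsum_entry i j
  have htrace : (SigmaMat A B Sig0 K').trace = ∑' t, (f t).trace := by
    rw [hSM]
    have happ : ∀ i j : Fin d, (∑' t, f t) i j = ∑' t, f t i j := fun i j => by
      exact (Pi.hasSum.mp (Pi.hasSum.mp hsum_mat.hasSum i) j).tsum_eq.symm
    calc (∑' t, f t).trace = ∑ i, (∑' t, f t) i i := rfl
    _ = ∑ i, ∑' t, f t i i := Finset.sum_congr rfl fun i _ => happ i i
    _ = ∑' t, ∑ i, f t i i := (Summable.tsum_finsetSum fun i _ => hsum_entry i i).symm
    _ = ∑' t, (f t).trace := rfl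
  have hterm : ∀ t, μ * (ρ ^ 2) ^ t ≤ (f t).trace := by
    intro t
    have h1 := aux_trace_bound hd hSig0 (L ^ t)
    have h3 := aux_pow_specRad_le_frobNorm hd L t
    have h4 : (0:ℝ) ≤ ∑ i, ∑ j, ((L ^ t) i j) ^ 2 := by positivity
    have h2 : (ρ ^ t) ^ 2 ≤ ∑ i, ∑ j, ((L ^ t) i j) ^ 2 := by
      have h5 := pow_le_pow_left₀ (by positivity : (0:ℝ) ≤ ρ ^ t) h3 2
      rwa [frobNorm, Real.sq_sqrt h4] at h5
    have h6 : μ * (ρ ^ 2) ^ t ≤ μ * ∑ i, ∑ j, ((L ^ t) i j) ^ 2 := by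
      have h7 : (ρ ^ 2) ^ t = (ρ ^ t) ^ 2 := by rw [← pow_mul, ← pow_mul, Nat.mul_comm]
      rw [h7]
      exact mul_le_mul_of_nonneg_left h2 hμ0.le
    exact h6.trans h1
  have hsum_lhs : Summable fun t => μ * (ρ ^ 2) ^ t :=
    (summable_geometric_of_lt_one (by positivity) (by nlinarith)).mul_left μ
  have hsum_tr : Summable fun t => (f t).trace := by
    have heq : (fun t => (f t).trace) = fun t => ∑ i, f t i i := rfl
    rw [heq]
    exact summable_sum fun i _ => hsum_entry i i
  have hle := Summable.tsum_le_tsum hterm hsum_lhs hsum_tr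
  have hgeom : ∑' t, μ * (ρ ^ 2) ^ t = μ * (1 - ρ ^ 2)⁻¹ := by
    rw [tsum_mul_left, tsum_geometric_of_lt_one (by positivity) (by nlinarith)]
  rw [htrace]
  refine le_trans ?_ (hgeom ▸ hle)
  have h1ρ : 0 < 1 - ρ := by linarith
  have h1ρ2 : 0 < 1 - ρ ^ 2 := by nlinarith
  rw [← div_eq_mul_inv, div_le_div_iff₀ (by linarith) h1ρ2]
  nlinarith [sq_nonneg (1 - ρ), hμ0.le]
end
end
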